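/- arXiv:2203.11703 — 3 statements merged into one kernel-verified Lean document; each statement's English description precedes it below -/
import Mathlib

section
/- (Diffeomorphism between trajectories of switching equivalent systems.) Let Θ be a signature matrix and let x : ℝ → ℝ^N be differentiable. Then x(t) satisfies x'(t) = −d x(t) + U S(α x(t) + γ A x(t)) for all t if and only if the curve y(t) := Θ x(t) satisfies y'(t) = −d y(t) + U S(α y(t) + γ (ΘAΘ) y(t)) for all t. -/
/-!
Multiplication by a signature matrix `Θ` is a linear involution, and it intertwines the two
vector fields: `Θ f_A(x) = f_{ΘAΘ}(Θ x)`. Indeed `(ΘAΘ)(Θ x) = Θ A x`, the diagonal matrices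
`Θ` and `U` commute, and an odd `S` commutes with each sign flip `θᵢ = ±1`. Hence `Θ` maps
solutions of one system to solutions of the other, and since `Θ (ΘAΘ) Θ = A` the converse is
the same statement applied to `ΘAΘ`.
-/

open Matrix

theorem HasDerivAt.matrix_mulVec {m n : Type*} [Fintype m] [Fintype n] (M : Matrix m n ℝ)
    {x : ℝ → n → ℝ} {x' : n → ℝ} {t : ℝ} (h : HasDerivAt x x' t) :
    HasDerivAt (fun s => M *ᵥ x s) (M *ᵥ x') t :=
  (LinearMap.toContinuousLinearMap (mulVecLin M)).hasFDerivAt.comp_hasDerivAt t h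

theorem apply_sign_mul_of_odd {S : ℝ → ℝ} (hS : ∀ y, S (-y) = -S y) {s : ℝ}
    (hs : s = 1 ∨ s = -1) (y : ℝ) : S (s * y) = s * S y := by
  rcases hs with rfl | rfl <;> simp [hS]

variable {n : Type*} [Fintype n] [DecidableEq n]

section Signature

variable {θ : n → ℝ} (hθ : ∀ i, θ i = 1 ∨ θ i = -1)
include hθ

theorem diagonal_mul_diagonal_self_of_sign : diagonal θ * diagonal θ = 1 := by
  rw [diagonal_mul_diagonal, ← diagonal_one]
  congr 1
  funext i
  rcases hθ i with h | h <;> simp [h]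

theorem diagonal_mulVec_diagonal_mulVec_of_sign (v : n → ℝ) :
    diagonal θ *ᵥ (diagonal θ *ᵥ v) = v := by
  rw [mulVec_mulVec, diagonal_mul_diagonal_self_of_sign hθ, one_mulVec]

theorem diagonal_mul_switch_mul_diagonal_of_sign (A : Matrix n n ℝ) :
    diagonal θ * (diagonal θ * A * diagonal θ) * diagonal θ = A := by
  simp only [← mul_assoc, diagonal_mul_diagonal_self_of_sign hθ, one_mul]
  rw [mul_assoc, diagonal_mul_diagonal_self_of_sign hθ, mul_one]

theorem switch_mulVec_diagonal_mulVec_of_sign (A : Matrix n n ℝ) (v : n → ℝ) :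
    (diagonal θ * A * diagonal θ) *ᵥ (diagonal θ *ᵥ v) = diagonal θ *ᵥ (A *ᵥ v) := by
  rw [mulVec_mulVec, mul_assoc, diagonal_mul_diagonal_self_of_sign hθ, mul_one, ← mulVec_mulVec]

end Signature

def opinionField (A : Matrix n n ℝ) (d α γ : ℝ) (u : n → ℝ) (S : ℝ → ℝ) (x : n → ℝ) :
    n → ℝ :=
  -d • x + diagonal u *ᵥ fun i => S ((α • x + γ • A *ᵥ x) i)

theorem diagonal_mulVec_opinionField {θ : n → ℝ} (hθ : ∀ i, θ i = 1 ∨ θ i = -1)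
    {S : ℝ → ℝ} (hS : ∀ y, S (-y) = -S y) (A : Matrix n n ℝ) (d α γ : ℝ) (u x : n → ℝ) :
    diagonal θ *ᵥ opinionField A d α γ u S x =
      opinionField (diagonal θ * A * diagonal θ) d α γ u S (diagonal θ *ᵥ x) := by
  funext i
  simp only [opinionField, switch_mulVec_diagonal_mulVec_of_sign hθ, Pi.add_apply,
    Pi.smul_apply, mulVec_diagonal, smul_eq_mul]
  rw [show α * (θ i * x i) + γ * (θ i * (A *ᵥ x) i) = θ i * (α * x i + γ * (A *ᵥ x) i) by ring,
    apply_sign_mul_of_odd hS (hθ i)]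
  ring

theorem HasDerivAt.diagonal_mulVec_of_opinionField {θ : n → ℝ}
    (hθ : ∀ i, θ i = 1 ∨ θ i = -1) {S : ℝ → ℝ} (hS : ∀ y, S (-y) = -S y)
    {A : Matrix n n ℝ} {d α γ : ℝ} {u : n → ℝ} {x : ℝ → n → ℝ} {t : ℝ}
    (h : HasDerivAt x (opinionField A d α γ u S (x t)) t) :
    HasDerivAt (fun s => diagonal θ *ᵥ x s)
      (opinionField (diagonal θ * A * diagonal θ) d α γ u S (diagonal θ *ᵥ x t)) t := by
  rw [← diagonal_mulVec_opinionField hθ hS]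
  exact h.matrix_mulVec _

theorem switching_trajectories_general {N : ℕ} (A : Matrix (Fin N) (Fin N) ℝ)
    (d α γ : ℝ)
    (u : Fin N → ℝ)
    (S : ℝ → ℝ) (hSodd : ∀ y, S (-y) = -S y)
    (θ : Fin N → ℝ) (hθ : ∀ i, θ i = 1 ∨ θ i = -1)
    (x : ℝ → Fin N → ℝ) :
    (∀ t : ℝ, HasDerivAt x
        (-d • x t + (Matrix.diagonal u).mulVec
          (fun i => S ((α • x t + γ • A.mulVec (x t)) i))) t) ↔
    (∀ t : ℝ, HasDerivAt (fun s => (Matrix.diagonal θ).mulVec (x s))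
        (-d • (Matrix.diagonal θ).mulVec (x t)
          + (Matrix.diagonal u).mulVec (fun i =>
              S ((α • (Matrix.diagonal θ).mulVec (x t)
                  + γ • (Matrix.diagonal θ * A * Matrix.diagonal θ).mulVec
                      ((Matrix.diagonal θ).mulVec (x t))) i))) t) := by
  refine ⟨fun h t => (h t).diagonal_mulVec_of_opinionField hθ hSodd, fun h t => ?_⟩
  have h' := (h t).diagonal_mulVec_of_opinionField hθ hSodd
  simp only [diagonal_mulVec_diagonal_mulVec_of_sign hθ,
    diagonal_mul_switch_mul_diagonal_of_sign hθ] at h'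
  exact h'

/-- Diffeomorphism between trajectories of switching equivalent systems: `x(t)` solves
the opinion dynamics on `A` iff `Θ x(t)` solves the opinion dynamics on `ΘAΘ`. -/
theorem switching_trajectories {N : ℕ} (A : Matrix (Fin N) (Fin N) ℝ)
    (d α γ : ℝ) (hd : 0 < d) (hα : 0 ≤ α) (hγ : 0 < γ)
    (u : Fin N → ℝ) (hu : ∀ i, 0 < u i)
    (S : ℝ → ℝ) (hSodd : ∀ y, S (-y) = -S y) (hS0 : S 0 = 0)
    (θ : Fin N → ℝ) (hθ : ∀ i, θ i = 1 ∨ θ i = -1)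
    (x : ℝ → Fin N → ℝ) (hx : Differentiable ℝ x) :
    (∀ t : ℝ, HasDerivAt x
        (-d • x t + (Matrix.diagonal u).mulVec
          (fun i => S ((α • x t + γ • A.mulVec (x t)) i))) t) ↔
    (∀ t : ℝ, HasDerivAt (fun s => (Matrix.diagonal θ).mulVec (x s))
        (-d • (Matrix.diagonal θ).mulVec (x t)
          + (Matrix.diagonal u).mulVec (fun i =>
              S ((α • (Matrix.diagonal θ).mulVec (x t)
                  + γ • (Matrix.diagonal θ * A * Matrix.diagonal θ).mulVec
                      ((Matrix.diagonal θ).mulVec (x t))) i))) t) :=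
  switching_trajectories_general A d α γ u S hSodd θ hθ x
end

section
/- (Boundedness / forward invariance.) Assume in addition that |S(y)| ≤ 1 for all y ∈ ℝ. Fix r ≥ 1 and let Ω_r = { x ∈ ℝ^N : |x_i| ≤ r · (max_j u_j)/d for all i }. Then Ω_r is forward invariant for the opinion dynamics: if x : [0,∞) → ℝ^N is a solution with x(0) ∈ Ω_r, then x(t) ∈ Ω_r for all t ≥ 0. -/
/-! Each coordinate `y = x_i` solves the scalar equation `y' = -d y + b(t)` whose forcing
`b = u_i S(⋯)` satisfies `|b| ≤ u_i ≤ r max_j u_j = d K`, where `K = r max_j u_j / d` is the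
half-width of the box. For such an equation `t ↦ e^{dt} (y t - K)` has derivative
`e^{dt} (b t - d K) ≤ 0`, so `y ≤ K` persists from time `0` on; the same argument applied
to `-y` gives `|y| ≤ K`. -/

open Set

section LinearDecay

variable {f b : ℝ → ℝ} {d K : ℝ}

lemma antitoneOn_exp_mul_sub_of_hasDerivAt
    (hf : ∀ t, 0 ≤ t → HasDerivAt f (-d * f t + b t) t) (hb : ∀ t, 0 ≤ t → b t ≤ d * K) :
    AntitoneOn (fun t => Real.exp (d * t) * (f t - K)) (Ici 0) := by
  have hg : ∀ t, 0 ≤ t → HasDerivAt (fun t => Real.exp (d * t) * (f t - K))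
      (Real.exp (d * t) * (b t - d * K)) t := fun t ht =>
    (((hasDerivAt_id' t).const_mul d).exp.mul ((hf t ht).sub_const K)).congr_deriv (by ring)
  refine antitoneOn_of_hasDerivWithinAt_nonpos (f' := fun t => Real.exp (d * t) * (b t - d * K))
    (convex_Ici 0)
    (fun t ht => (hg t ht).continuousAt.continuousWithinAt) (fun t ht => ?_) (fun t ht => ?_)
  · rw [interior_Ici] at ht
    exact (hg t ht.le).hasDerivWithinAt
  · rw [interior_Ici] at ht
    exact mul_nonpos_of_nonneg_of_nonpos (Real.exp_pos _).le (by linarith [hb t ht.le])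

lemma le_of_hasDerivAt_neg_mul_add
    (hf : ∀ t, 0 ≤ t → HasDerivAt f (-d * f t + b t) t) (hb : ∀ t, 0 ≤ t → b t ≤ d * K)
    (h0 : f 0 ≤ K) {t : ℝ} (ht : 0 ≤ t) : f t ≤ K := by
  have hmono := antitoneOn_exp_mul_sub_of_hasDerivAt hf hb self_mem_Ici ht ht
  simp only [mul_zero, Real.exp_zero, one_mul] at hmono
  nlinarith [Real.exp_pos (d * t)]

lemma abs_le_of_hasDerivAt_neg_mul_add
    (hf : ∀ t, 0 ≤ t → HasDerivAt f (-d * f t + b t) t) (hb : ∀ t, 0 ≤ t → |b t| ≤ d * K)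
    (h0 : |f 0| ≤ K) {t : ℝ} (ht : 0 ≤ t) : |f t| ≤ K := by
  rw [abs_le] at h0 ⊢
  have hneg : ∀ s, 0 ≤ s → HasDerivAt (fun s => -f s) (-d * -f s + -b s) s :=
    fun s hs => (hf s hs).neg.congr_deriv (by ring)
  exact ⟨neg_le.mp (le_of_hasDerivAt_neg_mul_add hneg
      (fun s hs => neg_le.mp (abs_le.mp (hb s hs)).1) (neg_le.mp h0.1) ht),
    le_of_hasDerivAt_neg_mul_add hf (fun s hs => (abs_le.mp (hb s hs)).2) h0.2 ht⟩

end LinearDecay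

theorem box_forward_invariant_general {N : ℕ} (hN : 0 < N) (A : Matrix (Fin N) (Fin N) ℝ)
    (d α γ : ℝ) (hd : 0 < d)
    (u : Fin N → ℝ) (hu : ∀ i, 0 < u i)
    (S : ℝ → ℝ)
    (hSbd : ∀ y, |S y| ≤ 1)
    (r : ℝ) (hr : 1 ≤ r)
    (x : ℝ → Fin N → ℝ)
    (hx : ∀ t : ℝ, 0 ≤ t → HasDerivAt x
        (-d • x t + (Matrix.diagonal u).mulVec
          (fun i => S ((α • x t + γ • A.mulVec (x t)) i))) t)
    (hx0 : ∀ i, |x 0 i| ≤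
      r * (Finset.univ.sup' (Finset.univ_nonempty_iff.mpr ⟨⟨0, hN⟩⟩) u) / d) :
    ∀ t : ℝ, 0 ≤ t → ∀ i, |x t i| ≤
      r * (Finset.univ.sup' (Finset.univ_nonempty_iff.mpr ⟨⟨0, hN⟩⟩) u) / d := by
  set M := Finset.univ.sup' (Finset.univ_nonempty_iff.mpr ⟨⟨0, hN⟩⟩) u
  intro t ht i
  have hui : u i ≤ M := Finset.le_sup' u (Finset.mem_univ i)
  have hxi : ∀ s, 0 ≤ s → HasDerivAt (fun s => x s i)
      (-d * x s i + u i * S ((α • x s + γ • A.mulVec (x s)) i)) s := fun s hs => by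
    simpa [Matrix.mulVec_diagonal] using hasDerivAt_pi.mp (hx s hs) i
  refine abs_le_of_hasDerivAt_neg_mul_add hxi (fun s _ => ?_) (hx0 i) ht
  calc |u i * S ((α • x s + γ • A.mulVec (x s)) i)|
      = u i * |S ((α • x s + γ • A.mulVec (x s)) i)| := by rw [abs_mul, abs_of_pos (hu i)]
    _ ≤ u i := mul_le_of_le_one_right (hu i).le (hSbd _)
    _ ≤ r * M := hui.trans (le_mul_of_one_le_left ((hu i).le.trans hui) hr)
    _ = d * (r * M / d) := by field_simp

/-- Boundedness / forward invariance: with `|S| ≤ 1`, the box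
`Ω_r = {x : |x_i| ≤ r·(max_j u_j)/d}` (with `r ≥ 1`) is forward invariant for the
opinion dynamics. -/
theorem box_forward_invariant {N : ℕ} (hN : 0 < N) (A : Matrix (Fin N) (Fin N) ℝ)
    (d α γ : ℝ) (hd : 0 < d) (hα : 0 ≤ α) (hγ : 0 < γ)
    (u : Fin N → ℝ) (hu : ∀ i, 0 < u i)
    (S : ℝ → ℝ) (hSodd : ∀ y, S (-y) = -S y) (hS0 : S 0 = 0)
    (hSbd : ∀ y, |S y| ≤ 1)
    (r : ℝ) (hr : 1 ≤ r)
    (x : ℝ → Fin N → ℝ)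
    (hx : ∀ t : ℝ, 0 ≤ t → HasDerivAt x
        (-d • x t + (Matrix.diagonal u).mulVec
          (fun i => S ((α • x t + γ • A.mulVec (x t)) i))) t)
    (hx0 : ∀ i, |x 0 i| ≤
      r * (Finset.univ.sup' (Finset.univ_nonempty_iff.mpr ⟨⟨0, hN⟩⟩) u) / d) :
    ∀ t : ℝ, 0 ≤ t → ∀ i, |x t i| ≤
      r * (Finset.univ.sup' (Finset.univ_nonempty_iff.mpr ⟨⟨0, hN⟩⟩) u) / d :=
  box_forward_invariant_general hN A d α γ hd u hu S hSbd r hr x hx hx0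
end

section
/- (Lyapunov decrease inequality.) Let A ∈ ℝ^{N×N} be symmetric with largest eigenvalue λ*, let d > 0, α ≥ 0, γ > 0 with α + γλ* > 0, let u satisfy 0 ≤ u < d/(α + γλ*), and set à = α I_N + γ A. Let S : ℝ → ℝ be odd, nondecreasing, concave on [0,∞), and differentiable at 0 with S′(0) = 1. Then for every x ∈ ℝ^N, ⟨S(Ãx), Ã(−d x + u S(Ãx))⟩ ≤ −(d − u(α + γλ*)) ‖S(Ãx)‖² ≤ 0, where S is applied componentwise and ‖·‖ is the Euclidean norm. (This quantity is the time derivative of the Lyapunov function V(x) = Σ_i ∫₀^{(Ãx)_i} S(η) dη along solutions with homogeneous attention u_i = u.) -/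
/-!
With `s = S(Ãx)`, the quantity splits as `-d ⟨s, Ãx⟩ + u ⟨s, Ãs⟩`. Since `S` is odd, monotone and
lies below its tangent `y ↦ y` at `0` (concavity on `[0, ∞)`), `S(y)² ≤ y S(y)` for every real `y`,
so `⟨s, Ãx⟩ ≥ ‖s‖²`. The Rayleigh bound `⟨v, Av⟩ ≤ λ* ‖v‖²`, i.e. positive semidefiniteness of
`λ* I - A`, gives `⟨s, Ãs⟩ ≤ (α + γλ*) ‖s‖²`.
-/

open Matrix

theorem Matrix.IsSymm.dotProduct_mulVec_le {n : Type*} [Fintype n] [DecidableEq n]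
    {A : Matrix n n ℝ} (hA : A.IsSymm) {c : ℝ}
    (hc : ∀ μ : ℝ, (∃ v : n → ℝ, v ≠ 0 ∧ A *ᵥ v = μ • v) → μ ≤ c) (v : n → ℝ) :
    v ⬝ᵥ A *ᵥ v ≤ c * (v ⬝ᵥ v) := by
  have hB : (c • 1 - A).IsHermitian :=
    (isHermitian_one.smul (IsSelfAdjoint.all c)).sub (by simpa [IsHermitian] using hA.eq)
  have hpsd : (c • 1 - A).PosSemidef := by
    refine hB.posSemidef_iff_eigenvalues_nonneg.mpr fun i => ?_
    have hAe : A *ᵥ ⇑(hB.eigenvectorBasis i) =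
        (c - hB.eigenvalues i) • ⇑(hB.eigenvectorBasis i) := by
      have := hB.mulVec_eigenvectorBasis i
      rw [sub_mulVec, smul_mulVec, one_mulVec] at this
      rw [sub_smul, ← this]
      abel
    have := hc _ ⟨_, (WithLp.ofLp_eq_zero 2).ne.2 (hB.eigenvectorBasis.orthonormal.ne_zero i), hAe⟩
    simp only [Pi.zero_apply]
    linarith
  have := hpsd.dotProduct_mulVec_nonneg v
  rw [star_trivial, sub_mulVec, smul_mulVec, one_mulVec, dotProduct_sub, dotProduct_smul,
    smul_eq_mul] at this
  linarith

theorem ConcaveOn.le_self_of_hasDerivAt_one {S : ℝ → ℝ} (hS : ConcaveOn ℝ (Set.Ici 0) S)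
    (hS0 : S 0 = 0) (hS' : HasDerivAt S 1 0) {y : ℝ} (hy : 0 ≤ y) : S y ≤ y := by
  rcases hy.eq_or_lt with rfl | hy
  · exact hS0.le
  have := hS.slope_le_of_hasDerivAt Set.self_mem_Ici hy.le hy hS'
  rwa [slope_def_field, hS0, sub_zero, sub_zero, div_le_one hy] at this

theorem sq_le_mul_of_odd_of_concaveOn {S : ℝ → ℝ} (hSodd : ∀ y, S (-y) = -S y)
    (hSmono : Monotone S) (hSconc : ConcaveOn ℝ (Set.Ici 0) S) (hS' : HasDerivAt S 1 0)
    (y : ℝ) : S y ^ 2 ≤ y * S y := by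
  have hS0 : S 0 = 0 := by linarith [neg_zero (G := ℝ) ▸ hSodd 0]
  have of_nonneg : ∀ t, 0 ≤ t → S t ^ 2 ≤ t * S t := fun t ht => by
    have h0 : 0 ≤ S t := hS0 ▸ hSmono ht
    nlinarith [hSconc.le_self_of_hasDerivAt_one hS0 hS' ht]
  rcases le_total 0 y with hy | hy
  · exact of_nonneg y hy
  · simpa [hSodd] using of_nonneg (-y) (neg_nonneg.mpr hy)

theorem lyapunov_decrease_general {N : ℕ} (A : Matrix (Fin N) (Fin N) ℝ)
    (hA : A.IsSymm) (lamStar : ℝ)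
    (hmax : ∀ μ : ℝ, (∃ v : Fin N → ℝ, v ≠ 0 ∧ A.mulVec v = μ • v) → μ ≤ lamStar)
    (d α γ u : ℝ) (hd : 0 < d) (hγ : 0 < γ)
    (hsum : 0 < α + γ * lamStar) (hu0 : 0 ≤ u) (hu : u < d / (α + γ * lamStar))
    (S : ℝ → ℝ) (hSodd : ∀ y, S (-y) = -S y) (hSmono : Monotone S)
    (hSconc : ConcaveOn ℝ (Set.Ici 0) S) (hS'0 : HasDerivAt S 1 0)
    (x : Fin N → ℝ) :
    (∑ i, S (((α • (1 : Matrix (Fin N) (Fin N) ℝ) + γ • A).mulVec x) i)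
        * (((α • (1 : Matrix (Fin N) (Fin N) ℝ) + γ • A).mulVec
            (-d • x + u • fun j =>
              S (((α • (1 : Matrix (Fin N) (Fin N) ℝ) + γ • A).mulVec x) j))) i)
      ≤ -(d - u * (α + γ * lamStar))
          * ∑ i, S (((α • (1 : Matrix (Fin N) (Fin N) ℝ) + γ • A).mulVec x) i) ^ 2) ∧
    (-(d - u * (α + γ * lamStar))
        * ∑ i, S (((α • (1 : Matrix (Fin N) (Fin N) ℝ) + γ • A).mulVec x) i) ^ 2 ≤ 0) := by
  set M := α • (1 : Matrix (Fin N) (Fin N) ℝ) + γ • A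
  set y := M *ᵥ x
  set s : Fin N → ℝ := fun j => S (y j)
  have hnorm : ∑ i, s i ^ 2 = s ⬝ᵥ s := by simp only [dotProduct, sq]
  have hsy : s ⬝ᵥ s ≤ s ⬝ᵥ y := Finset.sum_le_sum fun i _ => by
    simpa only [sq, mul_comm (y i)] using
      sq_le_mul_of_odd_of_concaveOn hSodd hSmono hSconc hS'0 (y i)
  have hsMs : s ⬝ᵥ M *ᵥ s ≤ (α + γ * lamStar) * (s ⬝ᵥ s) := by
    have := mul_le_mul_of_nonneg_left (hA.dotProduct_mulVec_le hmax s) hγ.le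
    rw [add_mulVec, smul_mulVec, smul_mulVec, one_mulVec, dotProduct_add, dotProduct_smul,
      dotProduct_smul, smul_eq_mul, smul_eq_mul]
    linarith
  have hgap : 0 < d - u * (α + γ * lamStar) := by
    rw [lt_div_iff₀ hsum] at hu; linarith
  have hss : 0 ≤ s ⬝ᵥ s := Finset.sum_nonneg fun i _ => mul_self_nonneg (s i)
  change s ⬝ᵥ M *ᵥ (-d • x + u • s) ≤ _ ∧ _
  rw [hnorm, mulVec_add, mulVec_smul, mulVec_smul, dotProduct_add, dotProduct_smul,
    dotProduct_smul, smul_eq_mul, smul_eq_mul]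
  refine ⟨?_, mul_nonpos_of_nonpos_of_nonneg (neg_nonpos.mpr hgap.le) hss⟩
  calc -d * (s ⬝ᵥ y) + u * (s ⬝ᵥ M *ᵥ s)
      ≤ -d * (s ⬝ᵥ s) + u * ((α + γ * lamStar) * (s ⬝ᵥ s)) :=
        add_le_add (mul_le_mul_of_nonpos_left hsy (neg_nonpos.mpr hd.le))
          (mul_le_mul_of_nonneg_left hsMs hu0)
    _ = -(d - u * (α + γ * lamStar)) * (s ⬝ᵥ s) := by ring

/-- Lyapunov decrease inequality: below threshold, along the opinion dynamics with
homogeneous attention `u`, `⟨S(Ãx), Ã(−dx + uS(Ãx))⟩ ≤ −(d − u(α+γλ*))‖S(Ãx)‖² ≤ 0`. -/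
theorem lyapunov_decrease {N : ℕ} (A : Matrix (Fin N) (Fin N) ℝ)
    (hA : A.IsSymm) (lamStar : ℝ)
    (heig : ∃ v : Fin N → ℝ, v ≠ 0 ∧ A.mulVec v = lamStar • v)
    (hmax : ∀ μ : ℝ, (∃ v : Fin N → ℝ, v ≠ 0 ∧ A.mulVec v = μ • v) → μ ≤ lamStar)
    (d α γ u : ℝ) (hd : 0 < d) (hα : 0 ≤ α) (hγ : 0 < γ)
    (hsum : 0 < α + γ * lamStar) (hu0 : 0 ≤ u) (hu : u < d / (α + γ * lamStar))
    (S : ℝ → ℝ) (hSodd : ∀ y, S (-y) = -S y) (hSmono : Monotone S)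
    (hSconc : ConcaveOn ℝ (Set.Ici 0) S) (hS'0 : HasDerivAt S 1 0)
    (x : Fin N → ℝ) :
    (∑ i, S (((α • (1 : Matrix (Fin N) (Fin N) ℝ) + γ • A).mulVec x) i)
        * (((α • (1 : Matrix (Fin N) (Fin N) ℝ) + γ • A).mulVec
            (-d • x + u • fun j =>
              S (((α • (1 : Matrix (Fin N) (Fin N) ℝ) + γ • A).mulVec x) j))) i)
      ≤ -(d - u * (α + γ * lamStar))
          * ∑ i, S (((α • (1 : Matrix (Fin N) (Fin N) ℝ) + γ • A).mulVec x) i) ^ 2) ∧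
    (-(d - u * (α + γ * lamStar))
        * ∑ i, S (((α • (1 : Matrix (Fin N) (Fin N) ℝ) + γ • A).mulVec x) i) ^ 2 ≤ 0) :=
  lyapunov_decrease_general A hA lamStar hmax d α γ u hd hγ hsum hu0 hu S hSodd hSmono hSconc hS'0 x
end
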